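/- Let 𝔓 be a simplicial affine convex polygonal semigroup such that int(𝒞) = int(𝔓̄). Then 𝔓 is Buchsbaum if and only if 𝔓̄ ∩ τ_j is generated by a single element for j = 1, 2. -/

import Mathlib

open Set
open scoped Pointwise

/-- Coercion of a lattice point of `ℕ²` into `ℚ²`. -/
def toQ (x : Fin 2 → ℕ) : Fin 2 → ℚ := fun i => (x i : ℚ)

/-- The rational cone `L_{ℚ≥}(G)` generated by a subset `G ⊆ ℚ²`. -/
def coneQ (G : Set (Fin 2 → ℚ)) : Set (Fin 2 → ℚ) :=
  {x | ∃ (n : ℕ) (q : Fin n → ℚ) (f : Fin n → (Fin 2 → ℚ)),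
    (∀ i, 0 ≤ q i) ∧ (∀ i, f i ∈ G) ∧ x = ∑ i, q i • f i}

/-- The ray from the origin through `v ∈ ℚ²`. -/
def rayQ (v : Fin 2 → ℚ) : Set (Fin 2 → ℚ) := {x | ∃ q : ℚ, 0 ≤ q ∧ x = q • v}

/-- The lattice points on the ray from the origin through `v`. -/
def rayN (v : Fin 2 → ℕ) : Set (Fin 2 → ℕ) := {x | toQ x ∈ rayQ (toQ v)}

/-- Square of the Euclidean norm of a lattice point. -/
def normSq (x : Fin 2 → ℕ) : ℕ := x 0 ^ 2 + x 1 ^ 2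

/-- The cone `𝒞 = L_{ℚ≥}(S) ∩ ℕ²` of a subsemigroup `S ⊆ ℕ²`. -/
def coneN (S : Set (Fin 2 → ℕ)) : Set (Fin 2 → ℕ) := {x | toQ x ∈ coneQ (toQ '' S)}

/-- The interior `int(X)` of `X` relative to the extremal rays through `v1, v2`. -/
def interiorOf (X : Set (Fin 2 → ℕ)) (v1 v2 : Fin 2 → ℕ) : Set (Fin 2 → ℕ) :=
  X \ (rayN v1 ∪ rayN v2)

/-- `S̄ = {a ∈ ℕ² : a + g ∈ S for every generator g ∈ G}`. -/
def sbar (S : Set (Fin 2 → ℕ)) (G : Finset (Fin 2 → ℕ)) : Set (Fin 2 → ℕ) :=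
  {a | ∀ g ∈ G, a + g ∈ S}

/-- `n` is the nonzero element of minimal (Euclidean) norm of `T` on the ray `τ`. -/
def IsMinOnRay (T τ : Set (Fin 2 → ℕ)) (n : Fin 2 → ℕ) : Prop :=
  n ∈ T ∩ τ ∧ n ≠ 0 ∧ ∀ m ∈ T ∩ τ, m ≠ 0 → normSq n ≤ normSq m

/-- The Cohen–Macaulay criterion for a simplicial semigroup `T ⊆ ℕ²` with cone `C`
and extremal rays `τ1, τ2`: for the minimal elements `n1, n2` of `T` on the two rays,
every `a ∈ C \ T` satisfies `a + n1 ∉ T` or `a + n2 ∉ T`. -/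
def IsCMsg (T C τ1 τ2 : Set (Fin 2 → ℕ)) : Prop :=
  ∃ n1 n2 : Fin 2 → ℕ, IsMinOnRay T τ1 n1 ∧ IsMinOnRay T τ2 n2 ∧
    ∀ a ∈ C \ T, a + n1 ∉ T ∨ a + n2 ∉ T

/-- `S` is Buchsbaum iff (Rosales) the semigroup `S̄` is Cohen–Macaulay. -/
def IsBuchsbaumSG (S : Set (Fin 2 → ℕ)) (G : Finset (Fin 2 → ℕ))
    (C τ1 τ2 : Set (Fin 2 → ℕ)) : Prop :=
  IsCMsg (sbar S G) C τ1 τ2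

/-- A subsemigroup of `ℕ²` is generated by a single element. -/
def genByOne (T : Set (Fin 2 → ℕ)) : Prop :=
  ∃ n : Fin 2 → ℕ, T = {x | ∃ k : ℕ, x = k • n}

/-- The circle semigroup of the circle (disk) of center `(a,b)` and radius `r`. -/
def circleSG (a b r : ℝ) : Set (Fin 2 → ℕ) :=
  {x | ∃ i : ℕ, ((x 0 : ℝ) - i * a) ^ 2 + ((x 1 : ℝ) - i * b) ^ 2 ≤ (i * r) ^ 2}

/-- The convex body semigroup `⋃ i, (i·F ∩ ℕ²)` of a convex body `F ⊆ ℚ²`. -/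
def polySG (F : Set (Fin 2 → ℚ)) : Set (Fin 2 → ℕ) :=
  {x | ∃ i : ℕ, toQ x ∈ (i : ℚ) • F}

/-- `G` is a minimal generating set of the semigroup `S`. -/
def minimalGenSet (S : Set (Fin 2 → ℕ)) (G : Finset (Fin 2 → ℕ)) : Prop :=
  (AddSubmonoid.closure (G : Set (Fin 2 → ℕ)) : Set (Fin 2 → ℕ)) = S ∧
  ∀ g ∈ G, g ∉ (AddSubmonoid.closure ((G.erase g : Finset (Fin 2 → ℕ)) :
    Set (Fin 2 → ℕ)) : Set (Fin 2 → ℕ))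

/-- `S` is simplicial with extremal rays through `v1` and `v2`. -/
def Simplicial (S : Set (Fin 2 → ℕ)) (v1 v2 : Fin 2 → ℕ) : Prop :=
  v1 ≠ 0 ∧ v2 ≠ 0 ∧ rayN v1 ≠ rayN v2 ∧
  coneQ (toQ '' S) = coneQ {toQ v1, toQ v2}

/-!
The condition `int(𝒞) = int(𝔓̄)` puts every point of `𝒞` off the extremal rays into `𝔓̄`, in
particular every sum `x + y` of nonzero `x ∈ τ₁`, `y ∈ τ₂`. Hence the Cohen–Macaulay criterion
for `𝔓̄` says exactly that each `𝔓̄ ∩ τⱼ` is closed under subtracting its minimal element `nⱼ'`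
inside `τⱼ`. As `𝔓̄` is a monoid and the lattice points of a ray are totally ordered, this holds
iff `𝔓̄ ∩ τⱼ = ℕ nⱼ'`: peel off `nⱼ'` by well-founded induction. The minimal elements exist
because `τⱼ` is extremal in the cone spanned by `𝔓 ⊆ 𝔓̄`, so it meets `𝔓` outside `0`.
-/

section LatticeRays

lemma toQ_add (x y : Fin 2 → ℕ) : toQ (x + y) = toQ x + toQ y := by
  funext i; simp [toQ]

lemma toQ_nsmul (k : ℕ) (x : Fin 2 → ℕ) : toQ (k • x) = (k : ℚ) • toQ x := by
  funext i; simp [toQ]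

lemma toQ_eq_zero {x : Fin 2 → ℕ} : toQ x = 0 ↔ x = 0 := by
  simp [funext_iff, toQ]

lemma normSq_strictMono : StrictMono normSq := by
  intro x y hxy
  obtain ⟨hle, i, hlt⟩ := Pi.lt_def.1 hxy
  have h0 := Nat.pow_le_pow_left (hle 0) 2
  have h1 := Nat.pow_le_pow_left (hle 1) 2
  have hi := Nat.pow_lt_pow_left hlt two_ne_zero
  unfold normSq
  fin_cases i <;> simp only [Fin.zero_eta, Fin.mk_one, Fin.isValue] at hi <;> omega

lemma rayQ_smul {c : ℚ} (hc : 0 < c) (w : Fin 2 → ℚ) : rayQ (c • w) = rayQ w := by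
  ext x
  constructor
  · rintro ⟨q, hq, rfl⟩
    exact ⟨q * c, by positivity, smul_smul q c w⟩
  · rintro ⟨q, hq, rfl⟩
    exact ⟨q / c, by positivity, by rw [smul_smul, div_mul_cancel₀ q hc.ne']⟩

variable {v x y : Fin 2 → ℕ}

lemma add_mem_rayN (hx : x ∈ rayN v) (hy : y ∈ rayN v) : x + y ∈ rayN v := by
  obtain ⟨a, ha, hxa⟩ := hx
  obtain ⟨b, hb, hyb⟩ := hy
  exact ⟨a + b, by positivity, by rw [toQ_add, hxa, hyb, add_smul]⟩

lemma nsmul_mem_rayN (hx : x ∈ rayN v) (k : ℕ) : k • x ∈ rayN v := by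
  obtain ⟨a, ha, hxa⟩ := hx
  exact ⟨k * a, by positivity, by rw [toQ_nsmul, hxa, smul_smul]⟩

lemma exists_add_mem_rayN (hx : x ∈ rayN v) (hy : y ∈ rayN v) :
    ∃ d ∈ rayN v, y = x + d ∨ x = y + d := by
  obtain ⟨a, ha, hxa⟩ := hx
  obtain ⟨b, hb, hyb⟩ := hy
  wlog hab : a ≤ b generalizing x y a b
  · obtain ⟨d, hd, h⟩ := this b hb hyb a ha hxa (le_of_not_ge hab)
    exact ⟨d, hd, h.symm⟩
  have hxy : x ≤ y := fun i => by
    have := mul_le_mul_of_nonneg_right hab (Nat.cast_nonneg (α := ℚ) (v i))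
    exact Nat.cast_le.1 ((congrFun hxa i).trans_le (this.trans_eq (congrFun hyb i).symm))
  obtain ⟨d, rfl⟩ := exists_add_of_le hxy
  refine ⟨d, ⟨b - a, sub_nonneg.2 hab, ?_⟩, Or.inl rfl⟩
  rw [sub_smul, ← hxa, ← hyb, toQ_add, add_sub_cancel_left]

end LatticeRays

section RayGeneration

variable {T : AddSubmonoid (Fin 2 → ℕ)} {v : Fin 2 → ℕ}

lemma exists_nsmul_of_isMinOnRay {n : Fin 2 → ℕ} (hn : IsMinOnRay T (rayN v) n)
    (hsub : ∀ x ∈ rayN v, x + n ∈ T → x ∈ T) :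
    ∀ m ∈ (T : Set (Fin 2 → ℕ)) ∩ rayN v, ∃ k : ℕ, m = k • n := by
  obtain ⟨⟨hnT, hnv⟩, hn0, hmin⟩ := hn
  intro m hm
  induction m using WellFoundedLT.induction with
  | _ m ih =>
    by_cases hm0 : m = 0
    · exact ⟨0, by rw [hm0, zero_smul]⟩
    have hsplit : ∃ d ∈ rayN v, m = n + d := by
      obtain ⟨d, hd, h | h⟩ := exists_add_mem_rayN hnv hm.2
      · exact ⟨d, hd, h⟩
      · obtain rfl : d = 0 := by
          by_contra hd0
          have := normSq_strictMono (lt_add_of_pos_right m (pos_iff_ne_zero.2 hd0))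
          exact (hmin m hm hm0).not_gt (h ▸ this)
        exact ⟨0, hd, by rw [h, add_zero, add_zero]⟩
    obtain ⟨d, hdv, rfl⟩ := hsplit
    have hdT : d ∈ T := hsub d hdv (add_comm n d ▸ hm.1)
    obtain ⟨k, rfl⟩ := ih d (lt_add_of_pos_left d (pos_iff_ne_zero.2 hn0)) ⟨hdT, hdv⟩
    exact ⟨k + 1, by rw [succ_nsmul']⟩

theorem genByOne_inter_rayN_iff (hT : ∃ x ∈ (T : Set (Fin 2 → ℕ)) ∩ rayN v, x ≠ 0) :
    genByOne ((T : Set (Fin 2 → ℕ)) ∩ rayN v) ↔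
      ∃ n, IsMinOnRay T (rayN v) n ∧ ∀ x ∈ rayN v, x + n ∈ T → x ∈ T := by
  constructor
  · rintro ⟨n, hTn⟩
    have hmem : ∀ {x}, x ∈ (T : Set (Fin 2 → ℕ)) ∩ rayN v ↔ ∃ k : ℕ, x = k • n :=
      fun {x} => Set.ext_iff.1 hTn x
    have hnT : n ∈ (T : Set (Fin 2 → ℕ)) ∩ rayN v := hmem.2 ⟨1, (one_smul ℕ n).symm⟩
    have hn0 : n ≠ 0 := by
      rintro rfl
      obtain ⟨x, hx, hx0⟩ := hT
      obtain ⟨k, rfl⟩ := hmem.1 hx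
      exact hx0 (smul_zero k)
    refine ⟨n, ⟨hnT, hn0, ?_⟩, fun x hxv hxn => ?_⟩
    · rintro m hm hm0
      obtain ⟨_ | j, rfl⟩ := hmem.1 hm
      · exact absurd (zero_smul ℕ n) hm0
      · exact normSq_strictMono.monotone (by rw [succ_nsmul]; exact le_add_self)
    · obtain ⟨k, hk⟩ := hmem.1 ⟨hxn, add_mem_rayN hxv hnT.2⟩
      rcases k with _ | j
      · exact absurd (add_eq_zero.1 (hk.trans (zero_smul ℕ n))).2 hn0
      · rw [succ_nsmul] at hk
        exact (hmem.2 ⟨j, add_right_cancel hk⟩).1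
  · rintro ⟨n, hn, hsub⟩
    refine ⟨n, Set.ext fun m => ⟨exists_nsmul_of_isMinOnRay hn hsub m, ?_⟩⟩
    rintro ⟨k, rfl⟩
    exact ⟨T.nsmul_mem hn.1.1 k, nsmul_mem_rayN hn.1.2 k⟩

variable {C τ : Set (Fin 2 → ℕ)} {n n' : Fin 2 → ℕ}

lemma mem_of_add_mem_of_cm (hCM : ∀ a ∈ C \ T, a + n ∉ T ∨ a + n' ∉ T) (hτ : τ ⊆ C)
    (hmix : ∀ x ∈ τ, x ≠ 0 → x + n' ∈ T) : ∀ x ∈ τ, x + n ∈ T → x ∈ T := by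
  intro x hx hxn
  by_contra hxT
  have hx0 : x ≠ 0 := by rintro rfl; exact hxT T.zero_mem
  exact (hCM x ⟨hτ hx, hxT⟩).elim (· hxn) (· (hmix x hx hx0))

variable {v1 v2 : Fin 2 → ℕ}

theorem isCMsg_iff_genByOne (hC : C \ T ⊆ rayN v1 ∪ rayN v2)
    (hray1 : rayN v1 ⊆ C) (hray2 : rayN v2 ⊆ C)
    (hmix : ∀ x ∈ rayN v1, x ≠ 0 → ∀ y ∈ rayN v2, y ≠ 0 → x + y ∈ T)
    (h1 : ∃ x ∈ (T : Set (Fin 2 → ℕ)) ∩ rayN v1, x ≠ 0)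
    (h2 : ∃ x ∈ (T : Set (Fin 2 → ℕ)) ∩ rayN v2, x ≠ 0) :
    IsCMsg T C (rayN v1) (rayN v2) ↔
      genByOne ((T : Set (Fin 2 → ℕ)) ∩ rayN v1) ∧ genByOne ((T : Set (Fin 2 → ℕ)) ∩ rayN v2) := by
  rw [genByOne_inter_rayN_iff h1, genByOne_inter_rayN_iff h2]
  constructor
  · rintro ⟨n1, n2, hn1, hn2, hCM⟩
    refine ⟨⟨n1, hn1, mem_of_add_mem_of_cm hCM hray1 fun x hx hx0 => ?_⟩,
      ⟨n2, hn2, mem_of_add_mem_of_cm (fun a ha => (hCM a ha).symm) hray2 fun y hy hy0 => ?_⟩⟩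
    · exact hmix x hx hx0 n2 hn2.1.2 hn2.2.1
    · exact add_comm n1 y ▸ hmix n1 hn1.1.2 hn1.2.1 y hy hy0
  · rintro ⟨⟨n1, hn1, hsub1⟩, ⟨n2, hn2, hsub2⟩⟩
    refine ⟨n1, n2, hn1, hn2, fun a ha => ?_⟩
    rcases hC ha with hav | hav
    · exact Or.inl fun h => ha.2 (hsub1 a hav h)
    · exact Or.inr fun h => ha.2 (hsub2 a hav h)

end RayGeneration

section Sbar

variable {G : Finset (Fin 2 → ℕ)}

lemma add_mem_closure_of_mem_sbar {a y : Fin 2 → ℕ}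
    (ha : a ∈ sbar (AddSubmonoid.closure (G : Set (Fin 2 → ℕ))) G)
    (hy : y ∈ AddSubmonoid.closure (G : Set (Fin 2 → ℕ))) (hy0 : y ≠ 0) :
    a + y ∈ AddSubmonoid.closure (G : Set (Fin 2 → ℕ)) := by
  suffices y = 0 ∨ a + y ∈ AddSubmonoid.closure (G : Set (Fin 2 → ℕ)) from this.resolve_left hy0
  clear hy0
  induction hy using AddSubmonoid.closure_induction with
  | mem g hg => exact Or.inr (ha g hg)
  | zero => exact Or.inl rfl
  | add y z _ hz hy' _ =>
    rcases hy' with rfl | hy'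
    · rwa [zero_add]
    · exact Or.inr (add_assoc a y z ▸ add_mem hy' hz)

variable (G) in
def sbarAddSubmonoid : AddSubmonoid (Fin 2 → ℕ) where
  carrier := sbar (AddSubmonoid.closure (G : Set (Fin 2 → ℕ))) G
  zero_mem' g hg := by
    rw [zero_add]
    exact AddSubmonoid.subset_closure hg
  add_mem' {a b} ha hb g hg := by
    by_cases hbg : b + g = 0
    · rw [add_assoc, hbg, add_zero]
      simpa [(add_eq_zero.1 hbg).2] using ha g hg
    · exact add_assoc a b g ▸
        add_mem_closure_of_mem_sbar ha (hb g hg) hbg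

lemma closure_subset_sbar :
    (AddSubmonoid.closure (G : Set (Fin 2 → ℕ)) : Set (Fin 2 → ℕ)) ⊆ sbarAddSubmonoid G :=
  fun _ hs _ hg => add_mem hs (AddSubmonoid.subset_closure hg)

end Sbar

section Cones

lemma subset_coneQ (G : Set (Fin 2 → ℚ)) : G ⊆ coneQ G := fun x hx =>
  ⟨1, ![1], ![x], fun i => by fin_cases i; norm_num, fun i => by fin_cases i; simpa, by simp⟩

lemma mem_coneQ_pair {w1 w2 x : Fin 2 → ℚ} :
    x ∈ coneQ {w1, w2} ↔ ∃ a b : ℚ, 0 ≤ a ∧ 0 ≤ b ∧ x = a • w1 + b • w2 := by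
  classical
  constructor
  · rintro ⟨n, q, f, hq, hf, rfl⟩
    refine ⟨∑ i with f i = w1, q i, ∑ i with f i ≠ w1, q i,
      Finset.sum_nonneg fun i _ => hq i, Finset.sum_nonneg fun i _ => hq i, ?_⟩
    rw [Finset.sum_smul, Finset.sum_smul,
      ← Finset.sum_filter_add_sum_filter_not Finset.univ (fun i => f i = w1)]
    congr 1 <;> refine Finset.sum_congr rfl fun i hi => ?_
    · rw [(Finset.mem_filter.1 hi).2]
    · rw [(hf i).resolve_left (Finset.mem_filter.1 hi).2]
  · rintro ⟨a, b, ha, hb, rfl⟩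
    refine ⟨2, ![a, b], ![w1, w2], fun i => ?_, fun i => ?_, by simp [Fin.sum_univ_two]⟩ <;>
      fin_cases i <;> simp [ha, hb]

def wedge (w : Fin 2 → ℚ) : (Fin 2 → ℚ) →ₗ[ℚ] ℚ :=
  w 0 • LinearMap.proj 1 - w 1 • LinearMap.proj 0

lemma wedge_apply (w x : Fin 2 → ℚ) : wedge w x = w 0 * x 1 - w 1 * x 0 := by
  simp [wedge]

lemma wedge_self (w : Fin 2 → ℚ) : wedge w w = 0 := by
  rw [wedge_apply]; ring

variable {w1 w2 : Fin 2 → ℚ}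

lemma wedge_smul_add_smul (a b : ℚ) : wedge w1 (a • w1 + b • w2) = b * wedge w1 w2 := by
  simp [wedge_self]

lemma add_notMem_rayQ (hw : wedge w1 w2 ≠ 0) {x y : Fin 2 → ℚ} (hx : x ∈ rayQ w1)
    (hy : y ∈ rayQ w2) (hy0 : y ≠ 0) : x + y ∉ rayQ w1 := by
  obtain ⟨a, -, rfl⟩ := hx
  obtain ⟨b, -, rfl⟩ := hy
  rintro ⟨c, -, hc⟩
  have hb : b ≠ 0 := by rintro rfl; exact hy0 (zero_smul ℚ w2)
  have := congrArg (wedge w1) hc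
  rw [wedge_smul_add_smul, map_smul, wedge_self, smul_zero] at this
  exact mul_ne_zero hb hw this

/-- Applying `wedge w1` to `w1 = ∑ qᵢ fᵢ` kills the `w2`-component of every `fᵢ` with `qᵢ > 0`. -/
lemma exists_mem_rayQ_of_coneQ_eq {G : Set (Fin 2 → ℚ)} (hcone : coneQ G = coneQ {w1, w2})
    (hw : wedge w1 w2 ≠ 0) (hw1 : w1 ≠ 0) : ∃ f ∈ G, f ≠ 0 ∧ f ∈ rayQ w1 := by
  obtain ⟨n, q, f, hq, hf, hsum⟩ : w1 ∈ coneQ G := hcone ▸ subset_coneQ _ (by simp)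
  choose a b ha hb hab using fun i => mem_coneQ_pair.1 (hcone ▸ subset_coneQ G (hf i))
  have hzero : ∀ i ∈ Finset.univ, q i * b i = 0 := by
    refine (Finset.sum_eq_zero_iff_of_nonneg fun i _ => mul_nonneg (hq i) (hb i)).1 ?_
    have := congrArg (wedge w1) hsum
    simp only [wedge_self, map_sum, map_smul, hab, wedge_smul_add_smul, smul_eq_mul] at this
    have hprod : (∑ i, q i * b i) * wedge w1 w2 = 0 := by
      rw [Finset.sum_mul]; simpa [mul_assoc] using this.symm
    exact (mul_eq_zero.1 hprod).resolve_right hw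
  obtain ⟨i, -, hi⟩ := Finset.exists_ne_zero_of_sum_ne_zero (hsum ▸ hw1)
  have hbi : b i = 0 := (mul_eq_zero.1 (hzero i (Finset.mem_univ i))).resolve_left
    (fun h => hi (by rw [h, zero_smul]))
  refine ⟨f i, hf i, fun h => hi (by rw [h, smul_zero]), a i, ha i, ?_⟩
  rw [hab i, hbi, zero_smul, add_zero]

end Cones

section Simplicial

variable {S : Set (Fin 2 → ℕ)} {v1 v2 : Fin 2 → ℕ}

lemma Simplicial.symm (h : Simplicial S v1 v2) : Simplicial S v2 v1 :=
  ⟨h.2.1, h.1, h.2.2.1.symm, by rw [h.2.2.2, Set.pair_comm]⟩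

/-- Nonzero lattice points with vanishing determinant are positive multiples of each other, the
factor being the ratio of their coordinate sums. -/
lemma Simplicial.wedge_ne_zero (h : Simplicial S v1 v2) : wedge (toQ v1) (toQ v2) ≠ 0 := by
  obtain ⟨hv1, hv2, hne, -⟩ := h
  intro hdet
  have hsum : ∀ {v : Fin 2 → ℕ}, v ≠ 0 → (0 : ℚ) < v 0 + v 1 := fun {v} hv => by
    have : v 0 ≠ 0 ∨ v 1 ≠ 0 := by
      by_contra! h0
      exact hv (funext fun i => by fin_cases i <;> simp [h0])
    exact_mod_cast (show 0 < v 0 + v 1 by omega)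
  set c : ℚ := (v2 0 + v2 1) / (v1 0 + v1 1)
  have hc : 0 < c := div_pos (hsum hv2) (hsum hv1)
  have h12 : toQ v2 = c • toQ v1 := by
    rw [wedge_apply] at hdet
    have h1 := (hsum hv1).ne'
    funext i
    simp only [toQ, Pi.smul_apply, smul_eq_mul, c]
    field_simp
    fin_cases i <;> simp only [toQ, Fin.zero_eta, Fin.mk_one, Fin.isValue] at hdet ⊢ <;> linarith
  exact hne (by simp only [rayN, h12, rayQ_smul hc])

lemma Simplicial.rayN_subset_coneN (h : Simplicial S v1 v2) : rayN v1 ⊆ coneN S := by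
  rintro x ⟨q, hq, hx⟩
  simp only [coneN, Set.mem_ofPred_eq, h.2.2.2, mem_coneQ_pair]
  exact ⟨q, 0, hq, le_rfl, by rw [hx, zero_smul, add_zero]⟩

lemma Simplicial.exists_mem_rayN (h : Simplicial S v1 v2) : ∃ s ∈ S, s ∈ rayN v1 ∧ s ≠ 0 := by
  obtain ⟨_, ⟨s, hs, rfl⟩, hs0, hsv⟩ :=
    exists_mem_rayQ_of_coneQ_eq h.2.2.2 h.wedge_ne_zero (mt toQ_eq_zero.1 h.1)
  exact ⟨s, hs, hsv, mt toQ_eq_zero.2 hs0⟩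

lemma Simplicial.add_mem_interiorOf (h : Simplicial S v1 v2) {x y : Fin 2 → ℕ}
    (hx : x ∈ rayN v1) (hx0 : x ≠ 0) (hy : y ∈ rayN v2) (hy0 : y ≠ 0) :
    x + y ∈ interiorOf (coneN S) v1 v2 := by
  refine ⟨?_, ?_⟩
  · obtain ⟨a, ha, hxa⟩ := hx
    obtain ⟨b, hb, hyb⟩ := hy
    simp only [coneN, Set.mem_ofPred_eq, h.2.2.2, mem_coneQ_pair]
    exact ⟨a, b, ha, hb, by rw [toQ_add, hxa, hyb]⟩
  · rintro (hxy | hxy)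
    · exact add_notMem_rayQ h.wedge_ne_zero hx hy (mt toQ_eq_zero.1 hy0) (toQ_add x y ▸ hxy)
    · exact add_notMem_rayQ h.symm.wedge_ne_zero hy hx (mt toQ_eq_zero.1 hx0)
        (add_comm (toQ y) _ ▸ toQ_add x y ▸ hxy)

lemma Simplicial.exists_mem_sbarAddSubmonoid_inter_rayN {G : Finset (Fin 2 → ℕ)}
    (h : Simplicial (AddSubmonoid.closure (G : Set (Fin 2 → ℕ)) : Set (Fin 2 → ℕ)) v1 v2) :
    ∃ x ∈ (sbarAddSubmonoid G : Set (Fin 2 → ℕ)) ∩ rayN v1, x ≠ 0 := by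
  obtain ⟨s, hs, hsv, hs0⟩ := h.exists_mem_rayN
  exact ⟨s, ⟨closure_subset_sbar hs, hsv⟩, hs0⟩

end Simplicial

lemma diff_subset_rayN_union_of_interiorOf_eq {X Y : Set (Fin 2 → ℕ)} {v1 v2 : Fin 2 → ℕ}
    (h : interiorOf X v1 v2 = interiorOf Y v1 v2) : X \ Y ⊆ rayN v1 ∪ rayN v2 := by
  rintro a ⟨haX, haY⟩
  by_contra hav
  have ha : a ∈ interiorOf X v1 v2 := ⟨haX, hav⟩
  exact haY (h ▸ ha).1

theorem stmt17_general
    (S : Set (Fin 2 → ℕ))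
    (G : Finset (Fin 2 → ℕ)) (hG : minimalGenSet S G)
    (v1 v2 : Fin 2 → ℕ) (hsimp : Simplicial S v1 v2)
    (hint : interiorOf (coneN S) v1 v2 = interiorOf (sbar S G) v1 v2) :
    IsBuchsbaumSG S G (coneN S) (rayN v1) (rayN v2) ↔
      genByOne (sbar S G ∩ rayN v1) ∧ genByOne (sbar S G ∩ rayN v2) := by
  obtain ⟨rfl, -⟩ := hG
  exact isCMsg_iff_genByOne (T := sbarAddSubmonoid G)
    (diff_subset_rayN_union_of_interiorOf_eq hint)
    hsimp.rayN_subset_coneN hsimp.symm.rayN_subset_coneN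
    (fun x hx hx0 y hy hy0 => (hint ▸ hsimp.add_mem_interiorOf hx hx0 hy hy0).1)
    hsimp.exists_mem_sbarAddSubmonoid_inter_rayN hsimp.symm.exists_mem_sbarAddSubmonoid_inter_rayN

/-- Let `𝔓` be a simplicial affine convex polygonal semigroup
with `int(𝒞) = int(𝔓̄)`. Then `𝔓` is Buchsbaum iff `𝔓̄ ∩ τ_j` is generated by a
single element for `j = 1, 2`. -/
theorem stmt17 (t : ℕ) (P : Fin t → (Fin 2 → ℚ)) (hpos : ∀ j i, 0 ≤ P j i)
    (hnseg : ¬ Collinear ℚ (Set.range P))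
    (S : Set (Fin 2 → ℕ)) (hS : S = polySG (convexHull ℚ (Set.range P)))
    (G : Finset (Fin 2 → ℕ)) (hG : minimalGenSet S G)
    (v1 v2 : Fin 2 → ℕ) (hsimp : Simplicial S v1 v2)
    (hint : interiorOf (coneN S) v1 v2 = interiorOf (sbar S G) v1 v2) :
    IsBuchsbaumSG S G (coneN S) (rayN v1) (rayN v2) ↔
      genByOne (sbar S G ∩ rayN v1) ∧ genByOne (sbar S G ∩ rayN v2) :=
  stmt17_general S G hG v1 v2 hsimp hint
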